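/- For x ∈ ℝ³ with ‖x‖ < π, the right Jacobian of SO(3) is invertible; explicitly det J_r(x) = 2(1 - cos‖x‖)/‖x‖² > 0 for 0 < ‖x‖ < π, and det J_r(0) = 1. -/

import Mathlib

/-!
Since `(x^∧)³ = -‖x‖² x^∧`, the series defining `J_r(x)` collapses (even and odd powers
separately) to the closed form `1 - a x^∧ + b (x^∧)²` with `a = (1 - cos θ)/θ²`,
`b = (θ - sin θ)/θ³`, `θ = ‖x‖`. A direct `3 × 3` computation gives
`det (1 - a x^∧ + b (x^∧)²) = (1 - b θ²)² + a² θ²`, which here is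
`(sin² θ + (1 - cos θ)²)/θ² = 2(1 - cos θ)/θ²`, positive for `0 < θ < π`.
-/

open Matrix
open scoped Nat

/-- The hat map `x^∧` for `so(3)`. -/
def hat (x : Fin 3 → ℝ) : Matrix (Fin 3) (Fin 3) ℝ :=
  !![0, -x 2, x 1; x 2, 0, -x 0; -x 1, x 0, 0]

/-- Right Jacobian of `SO(3)`: `J_r(x) = Σ_{k≥0} (-x^∧)^k/(k+1)!`. -/
noncomputable def Jr (x : Fin 3 → ℝ) : Matrix (Fin 3) (Fin 3) ℝ :=
  ∑' k : ℕ, (((k + 1)! : ℝ))⁻¹ • (-(hat x)) ^ k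

open Real

lemma hat_mul_hat (x : Fin 3 → ℝ) : hat x * hat x =
    !![-(x 1 ^ 2 + x 2 ^ 2), x 0 * x 1, x 0 * x 2;
       x 0 * x 1, -(x 0 ^ 2 + x 2 ^ 2), x 1 * x 2;
       x 0 * x 2, x 1 * x 2, -(x 0 ^ 2 + x 1 ^ 2)] := by
  simp only [hat, mul_fin_three, EmbeddingLike.apply_eq_iff_eq, vecCons_inj, and_true]
  constructorm* _ ∧ _ <;> ring

lemma hat_mul_hat_mul_hat (x : Fin 3 → ℝ) :
    hat x * (hat x * hat x) = -(x 0 ^ 2 + x 1 ^ 2 + x 2 ^ 2) • hat x := by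
  rw [hat_mul_hat, hat, mul_fin_three, smul_of]
  simp only [smul_cons, smul_empty, smul_eq_mul, EmbeddingLike.apply_eq_iff_eq, vecCons_inj,
    and_true]
  constructorm* _ ∧ _ <;> ring

lemma hat_pow_two_mul_add_one (x : Fin 3 → ℝ) (m : ℕ) :
    hat x ^ (2 * m + 1) = (-(x 0 ^ 2 + x 1 ^ 2 + x 2 ^ 2)) ^ m • hat x := by
  induction m with
  | zero => simp
  | succ m ih =>
    rw [show 2 * (m + 1) + 1 = 2 + (2 * m + 1) by ring, pow_add, ih, mul_smul_comm,
      pow_two (hat x), mul_assoc, hat_mul_hat_mul_hat, smul_smul, ← pow_succ]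

lemma hat_pow_two_mul_add_two (x : Fin 3 → ℝ) (m : ℕ) :
    hat x ^ (2 * m + 2) = (-(x 0 ^ 2 + x 1 ^ 2 + x 2 ^ 2)) ^ m • (hat x * hat x) := by
  rw [pow_succ, hat_pow_two_mul_add_one, smul_mul_assoc]

lemma sum_sq_pos_of_ne_zero {x : Fin 3 → ℝ} (hx : x ≠ 0) :
    0 < x 0 ^ 2 + x 1 ^ 2 + x 2 ^ 2 := by
  by_contra! h
  refine hx (funext fun i => pow_eq_zero_iff two_ne_zero |>.mp ?_)
  fin_cases i <;> dsimp <;> nlinarith [sq_nonneg (x 0), sq_nonneg (x 1), sq_nonneg (x 2)]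

lemma hat_zero : hat 0 = 0 := by
  ext i j; fin_cases i <;> fin_cases j <;> simp [hat]

lemma Jr_zero : Jr 0 = 1 := by
  rw [Jr, hat_zero, neg_zero, tsum_eq_single 0 fun k hk => by simp [zero_pow hk]]
  simp

lemma det_one_sub_smul_hat_add_smul_hat_mul_hat (x : Fin 3 → ℝ) (a b : ℝ) :
    (1 - a • hat x + b • (hat x * hat x)).det
      = (1 - b * (x 0 ^ 2 + x 1 ^ 2 + x 2 ^ 2)) ^ 2 + a ^ 2 * (x 0 ^ 2 + x 1 ^ 2 + x 2 ^ 2) := by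
  rw [hat_mul_hat, det_fin_three]
  simp only [hat, smul_of, smul_cons, smul_eq_mul, smul_empty, Matrix.add_apply, Matrix.sub_apply,
    of_apply, cons_val', cons_val_zero, cons_val_one, cons_val, cons_val_fin_one, one_apply_eq,
    one_apply_ne, ne_eq, Fin.reduceEq, not_false_eq_true]
  ring

lemma hasSum_neg_sq_pow_div_factorial_two_mul_add_two {θ : ℝ} (hθ : θ ≠ 0) :
    HasSum (fun m : ℕ => (-θ ^ 2) ^ m / (2 * m + 2)!) ((1 - cos θ) / θ ^ 2) := by
  have hcos := (hasSum_nat_add_iff' 1).mpr (hasSum_cos θ)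
  rw [show (1 - cos θ) / θ ^ 2
      = -((cos θ - ∑ i ∈ Finset.range 1, (-1) ^ i * θ ^ (2 * i) / (2 * i)!) / θ ^ 2) by
    rw [Finset.sum_range_one, ← neg_div, neg_sub]; norm_num]
  refine (hcos.div_const _).neg.congr_fun fun m => ?_
  rw [show 2 * (m + 1) = 2 * m + 2 by ring]
  field_simp
  ring

lemma hasSum_neg_sq_pow_div_factorial_two_mul_add_three {θ : ℝ} (hθ : θ ≠ 0) :
    HasSum (fun m : ℕ => (-θ ^ 2) ^ m / (2 * m + 3)!) ((θ - sin θ) / θ ^ 3) := by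
  have hsin := (hasSum_nat_add_iff' 1).mpr (hasSum_sin θ)
  rw [show (θ - sin θ) / θ ^ 3
      = -((sin θ - ∑ i ∈ Finset.range 1, (-1) ^ i * θ ^ (2 * i + 1) / (2 * i + 1)!) / θ ^ 3) by
    rw [Finset.sum_range_one, ← neg_div, neg_sub]; norm_num]
  refine (hsin.div_const _).neg.congr_fun fun m => ?_
  rw [show 2 * (m + 1) + 1 = 2 * m + 3 by ring]
  field_simp
  ring

section ClosedForm

variable {x : Fin 3 → ℝ} {θ : ℝ}

lemma hasSum_Jr_odd (hθ : θ ≠ 0) (hnorm : x 0 ^ 2 + x 1 ^ 2 + x 2 ^ 2 = θ ^ 2) :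
    HasSum (fun m : ℕ => ((2 * m + 1 + 1)! : ℝ)⁻¹ • (-hat x) ^ (2 * m + 1))
      (-(((1 - cos θ) / θ ^ 2) • hat x)) := by
  refine ((hasSum_neg_sq_pow_div_factorial_two_mul_add_two hθ).smul_const (hat x)).neg.congr_fun
    fun m => ?_
  rw [Odd.neg_pow ⟨m, rfl⟩, hat_pow_two_mul_add_one, hnorm, smul_neg, smul_smul, div_eq_inv_mul]

lemma hasSum_Jr_even (hθ : θ ≠ 0) (hnorm : x 0 ^ 2 + x 1 ^ 2 + x 2 ^ 2 = θ ^ 2) :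
    HasSum (fun m : ℕ => ((2 * m + 1)! : ℝ)⁻¹ • (-hat x) ^ (2 * m))
      (1 + ((θ - sin θ) / θ ^ 3) • (hat x * hat x)) := by
  have h := (hasSum_nat_add_iff (f := fun m : ℕ => ((2 * m + 1)! : ℝ)⁻¹ • (-hat x) ^ (2 * m)) 1).mp
    (((hasSum_neg_sq_pow_div_factorial_two_mul_add_three hθ).smul_const (hat x * hat x)).congr_fun
      fun m => ?_)
  · simpa [add_comm] using h
  rw [Even.neg_pow ⟨m + 1, by ring⟩, show 2 * (m + 1) = 2 * m + 2 by ring,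
    hat_pow_two_mul_add_two, hnorm, smul_smul, div_eq_inv_mul]

lemma Jr_eq (hθ : θ ≠ 0) (hnorm : x 0 ^ 2 + x 1 ^ 2 + x 2 ^ 2 = θ ^ 2) :
    Jr x = 1 - ((1 - cos θ) / θ ^ 2) • hat x + ((θ - sin θ) / θ ^ 3) • (hat x * hat x) := by
  rw [Jr, (HasSum.even_add_odd (f := fun k : ℕ => ((k + 1)! : ℝ)⁻¹ • (-hat x) ^ k)
    (hasSum_Jr_even hθ hnorm) (hasSum_Jr_odd hθ hnorm)).tsum_eq]
  abel

lemma det_Jr_eq (hθ : θ ≠ 0) (hnorm : x 0 ^ 2 + x 1 ^ 2 + x 2 ^ 2 = θ ^ 2) :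
    (Jr x).det = 2 * (1 - cos θ) / θ ^ 2 := by
  rw [Jr_eq hθ hnorm, det_one_sub_smul_hat_add_smul_hat_mul_hat, hnorm]
  field_simp
  linear_combination sin_sq_add_cos_sq θ

end ClosedForm

/-- For `x ∈ ℝ³` with `‖x‖ < π`, the right Jacobian of `SO(3)` is invertible; explicitly
`det J_r(x) = 2(1 - cos ‖x‖)/‖x‖²` for `0 < ‖x‖ < π`, and `det J_r(0) = 1`. -/
theorem jr_so3_invertible (x : Fin 3 → ℝ)
    (hx : Real.sqrt (x 0 ^ 2 + x 1 ^ 2 + x 2 ^ 2) < Real.pi) :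
    IsUnit (Jr x) ∧
      (0 < Real.sqrt (x 0 ^ 2 + x 1 ^ 2 + x 2 ^ 2) →
        (Jr x).det =
          2 * (1 - Real.cos (Real.sqrt (x 0 ^ 2 + x 1 ^ 2 + x 2 ^ 2))) /
            Real.sqrt (x 0 ^ 2 + x 1 ^ 2 + x 2 ^ 2) ^ 2) ∧
      (x = 0 → (Jr x).det = 1) := by
  rcases eq_or_ne x 0 with rfl | hx0
  · simp [Jr_zero]
  set θ := √(x 0 ^ 2 + x 1 ^ 2 + x 2 ^ 2)
  have hθ : 0 < θ := sqrt_pos.mpr (sum_sq_pos_of_ne_zero hx0)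
  have hdet := det_Jr_eq hθ.ne' (sq_sqrt (by positivity)).symm
  have hcos : cos θ < 1 := by
    simpa using cos_lt_cos_of_nonneg_of_le_pi le_rfl hx.le hθ
  have hdet_pos : 0 < (Jr x).det := hdet ▸ div_pos (by linarith) (by positivity)
  exact ⟨(isUnit_iff_isUnit_det _).mpr hdet_pos.ne'.isUnit, fun _ => hdet, fun h => absurd h hx0⟩
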